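/- arXiv:math/0109223 — 7 statements merged into one kernel-verified Lean document; each statement's English description precedes it below -/
import Mathlib

section
/- (Realizability step in the proof of Lemma 5.6.) The explicit pair (G₂⁰, G₃⁰) is a Weierstrass pair of type (I4,4I2). Explicitly: G₂⁰ and G₃⁰ are homogeneous of degrees 4 and 6, one has the identity (G₂⁰)³ − (G₃⁰)² = −¼·X⁴·Y²·(X−Y)²·(Y−φX)²·(Y−ψX)², where φ = (1+√5)/2 and ψ = (1−√5)/2, the five linear forms X, Y, X−Y, Y−φX, Y−ψX are pairwise non-proportional, and none of these five linear forms divides G₂⁰ or G₃⁰. -/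
/-!
For any h₁, h₂ in a commutative ring containing ½ one has
(h₁h₂)³ − (½(h₁³ + h₂³))² = −¼(h₁³ − h₂³)². Since η² + η + 1 = 0,
H₁ − H₂ = X² + XY − Y² = −(Y − φX)(Y − ψX) and H₁² + H₁H₂ + H₂² = X²Y(X − Y), so
H₁³ − H₂³ = −X·L₁L₂L₃L₄L₅, which gives the discriminant identity.
At a zero v of some Lᵢ this forces H₁(v)³ = H₂(v)³, so G₂⁰(v) = H₁(v)H₂(v) and G₃⁰(v) = H₁(v)³
are nonzero as soon as H₁(v) ≠ 0, which is checked at one zero of each Lᵢ.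
-/

open MvPolynomial

noncomputable section

/-- A *Weierstrass pair of type (I4,4I2)*. -/
def IsWeierstrassI4FourI2 (G₂ G₃ : MvPolynomial (Fin 2) ℂ) : Prop :=
  G₂.IsHomogeneous 4 ∧ G₃.IsHomogeneous 6 ∧
  ∃ (L : Fin 5 → MvPolynomial (Fin 2) ℂ) (u : ℂˣ),
    (∀ i, (L i).IsHomogeneous 1 ∧ L i ≠ 0) ∧
    (∀ i j, i ≠ j → ∀ t : ℂ, L i ≠ t • L j) ∧
    G₂ ^ 3 - G₃ ^ 2 =
      C (u : ℂ) * (L 0) ^ 4 * (L 1) ^ 2 * (L 2) ^ 2 * (L 3) ^ 2 * (L 4) ^ 2 ∧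
    (∀ i, ¬ L i ∣ G₂ ∧ ¬ L i ∣ G₃)

/-- The variable `X`. -/
def Xp : MvPolynomial (Fin 2) ℂ := X 0
/-- The variable `Y`. -/
def Yp : MvPolynomial (Fin 2) ℂ := X 1

/-- `H₁ = (1−η)⁻¹·(X² − ηXY + ηY²)`. -/
def H1 (η : ℂ) : MvPolynomial (Fin 2) ℂ :=
  C (1 - η)⁻¹ * (Xp ^ 2 - C η * Xp * Yp + C η * Yp ^ 2)

/-- `H₂ = (1−η)⁻¹·(ηX² − XY + Y²)`. -/
def H2 (η : ℂ) : MvPolynomial (Fin 2) ℂ :=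
  C (1 - η)⁻¹ * (C η * Xp ^ 2 - Xp * Yp + Yp ^ 2)

/-- `G₂⁰ = H₁·H₂`. -/
def G20 (η : ℂ) : MvPolynomial (Fin 2) ℂ := H1 η * H2 η

/-- `G₃⁰ = ½·(H₁³ + H₂³)`. -/
def G30 (η : ℂ) : MvPolynomial (Fin 2) ℂ := C (2⁻¹ : ℂ) * ((H1 η) ^ 3 + (H2 η) ^ 3)

/-- `φ = (1+√5)/2`. -/
def phi : ℂ := ((1 + Real.sqrt 5) / 2 : ℝ)
/-- `ψ = (1−√5)/2`. -/
def psi : ℂ := ((1 - Real.sqrt 5) / 2 : ℝ)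

/-- The five linear forms `X, Y, X−Y, Y−φX, Y−ψX`. -/
def Lforms : Fin 5 → MvPolynomial (Fin 2) ℂ :=
  ![Xp, Yp, Xp - Yp, Yp - C phi * Xp, Yp - C psi * Xp]

lemma cube_sub_sq_eq_neg_sq_mul_sq {R : Type*} [CommRing R] {c : R} (hc : 2 * c = 1) (a b : R) :
    (a * b) ^ 3 - (c * (a ^ 3 + b ^ 3)) ^ 2 = -c ^ 2 * (a ^ 3 - b ^ 3) ^ 2 := by
  linear_combination (-(2 * c + 1) * a ^ 3 * b ^ 3) * hc

lemma IsPrimitiveRoot.sq_add_self_add_one {R : Type*} [CommRing R] [IsDomain R] {ζ : R}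
    (hζ : IsPrimitiveRoot ζ 3) : ζ ^ 2 + ζ + 1 = 0 := by
  have h := hζ.geom_sum_eq_zero (by norm_num)
  simp only [Finset.sum_range_succ, Finset.sum_range_zero, pow_zero, pow_one, zero_add] at h
  linear_combination h

lemma ne_zero_of_sq_add_self_add_one {R : Type*} [Ring R] [Nontrivial R] {ζ : R}
    (h : ζ ^ 2 + ζ + 1 = 0) : ζ ≠ 0 := by
  rintro rfl
  norm_num at h

lemma ne_one_of_sq_add_self_add_one {R : Type*} [Ring R] [CharZero R] {ζ : R}
    (h : ζ ^ 2 + ζ + 1 = 0) : ζ ≠ 1 := by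
  rintro rfl
  norm_num at h

lemma ne_zero_of_sq_eq_add_one {R : Type*} [Ring R] [Nontrivial R] {r : R} (h : r ^ 2 = r + 1) :
    r ≠ 0 := by
  rintro rfl
  simp at h

lemma ne_one_of_sq_eq_add_one {R : Type*} [Ring R] [Nontrivial R] {r : R} (h : r ^ 2 = r + 1) :
    r ≠ 1 := by
  rintro rfl
  simp at h

lemma sq_eq_self_add_one_of_add_of_mul {R : Type*} [CommRing R] {r s : R} (hadd : r + s = 1)
    (hmul : r * s = -1) : r ^ 2 = r + 1 := by
  linear_combination r * hadd - hmul

lemma MvPolynomial.eval_mul_eval_eq_of_eq_smul {σ R : Type*} [CommSemiring R]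
    {p q : MvPolynomial σ R} {t : R} (h : p = t • q) (u v : σ → R) :
    eval u p * eval v q = eval v p * eval u q := by
  simp only [h, smul_eq_C_mul, eval_mul, eval_C]
  ring

lemma MvPolynomial.not_dvd_of_eval_eq_zero {σ R : Type*} [CommSemiring R]
    {p q : MvPolynomial σ R} {v : σ → R} (hp : eval v p = 0) (hq : eval v q ≠ 0) : ¬ p ∣ q :=
  fun hpq => hq (zero_dvd_iff.mp (hp ▸ map_dvd (eval v) hpq))

lemma phi_add_psi : phi + psi = 1 := by
  unfold phi psi
  push_cast
  ring

lemma phi_mul_psi : phi * psi = -1 := by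
  have h5 : ((Real.sqrt 5 : ℝ) : ℂ) ^ 2 = 5 := by
    exact_mod_cast Real.sq_sqrt (by norm_num : (0 : ℝ) ≤ 5)
  unfold phi psi
  push_cast
  linear_combination (-1 / 4 : ℂ) * h5

lemma phi_ne_psi : phi ≠ psi := by
  unfold phi psi
  rw [Ne, Complex.ofReal_inj]
  have : 0 < Real.sqrt 5 := by positivity
  intro h
  linarith

lemma phi_sq : phi ^ 2 = phi + 1 := sq_eq_self_add_one_of_add_of_mul phi_add_psi phi_mul_psi

lemma psi_sq : psi ^ 2 = psi + 1 :=
  sq_eq_self_add_one_of_add_of_mul ((add_comm _ _).trans phi_add_psi)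
    ((mul_comm _ _).trans phi_mul_psi)

lemma Yp_sub_phi_mul_Yp_sub_psi :
    (Yp - C phi * Xp) * (Yp - C psi * Xp) = -(Xp ^ 2 + Xp * Yp - Yp ^ 2) := by
  have hadd : C phi + C psi = (1 : MvPolynomial (Fin 2) ℂ) := by
    rw [← map_add, phi_add_psi, map_one]
  have hmul : C phi * C psi = (-1 : MvPolynomial (Fin 2) ℂ) := by
    rw [← map_mul, phi_mul_psi, map_neg, map_one]
  linear_combination (-(Xp * Yp)) * hadd + Xp ^ 2 * hmul

lemma prod_Lforms :
    ∏ i, Lforms i = Xp * Yp * (Xp - Yp) * (Yp - C phi * Xp) * (Yp - C psi * Xp) := by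
  rw [Fin.prod_univ_five]
  rfl

lemma isHomogeneous_Lforms (i : Fin 5) : (Lforms i).IsHomogeneous 1 := by
  have hX := isHomogeneous_X ℂ (0 : Fin 2)
  have hY := isHomogeneous_X ℂ (1 : Fin 2)
  fin_cases i
  exacts [hX, hY, hX.sub hY, hY.sub (isHomogeneous_C_mul_X _ _), hY.sub (isHomogeneous_C_mul_X _ _)]

lemma Lforms_not_proportional : ∀ i j, i ≠ j → ∀ t : ℂ, Lforms i ≠ t • Lforms j := by
  intro i j hij t h
  have hdet := eval_mul_eval_eq_of_eq_smul h ![1, 0] ![0, 1]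
  have hφ₀ := ne_zero_of_sq_eq_add_one phi_sq
  have hψ₀ := ne_zero_of_sq_eq_add_one psi_sq
  have hφ₁ := ne_one_of_sq_eq_add_one phi_sq
  have hψ₁ := ne_one_of_sq_eq_add_one psi_sq
  fin_cases i <;> fin_cases j <;>
    simp [Lforms, Xp, Yp, hφ₀, hψ₀, hφ₁, hφ₁.symm, hψ₁, hψ₁.symm, phi_ne_psi, phi_ne_psi.symm]
      at hij hdet

def LformsRoot : Fin 5 → Fin 2 → ℂ := ![![0, 1], ![1, 0], ![1, 1], ![1, phi], ![1, psi]]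

lemma eval_LformsRoot (i : Fin 5) : eval (LformsRoot i) (Lforms i) = 0 := by
  fin_cases i <;> simp [LformsRoot, Lforms, Xp, Yp]

lemma isHomogeneous_H1 (η : ℂ) : (H1 η).IsHomogeneous 2 :=
  (((isHomogeneous_X_pow _ 2).sub (((isHomogeneous_X ℂ 0).C_mul η).mul (isHomogeneous_X ℂ 1))).add
    ((isHomogeneous_X_pow _ 2).C_mul η)).C_mul _

lemma isHomogeneous_H2 (η : ℂ) : (H2 η).IsHomogeneous 2 :=
  ((((isHomogeneous_X_pow _ 2).C_mul η).sub ((isHomogeneous_X ℂ 0).mul (isHomogeneous_X ℂ 1))).add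
    (isHomogeneous_X_pow _ 2)).C_mul _

lemma isHomogeneous_G20 (η : ℂ) : (G20 η).IsHomogeneous 4 :=
  (isHomogeneous_H1 η).mul (isHomogeneous_H2 η)

lemma isHomogeneous_G30 (η : ℂ) : (G30 η).IsHomogeneous 6 :=
  (((isHomogeneous_H1 η).pow 3).add ((isHomogeneous_H2 η).pow 3)).C_mul _

lemma eval_H1 (η x y : ℂ) : eval ![x, y] (H1 η) = (1 - η)⁻¹ * (x ^ 2 - η * x * y + η * y ^ 2) := by
  simp [H1, Xp, Yp]

section

variable {η : ℂ}

lemma C_inv_one_sub_mul (hη : η ≠ 1) : C (1 - η)⁻¹ * (1 - C η) = (1 : MvPolynomial (Fin 2) ℂ) := by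
  rw [← map_one C, ← map_sub, ← map_mul, inv_mul_cancel₀ (sub_ne_zero.mpr hη.symm)]

lemma H1_sub_H2 (hη : η ≠ 1) : H1 η - H2 η = Xp ^ 2 + Xp * Yp - Yp ^ 2 := by
  unfold H1 H2
  linear_combination (Xp ^ 2 + Xp * Yp - Yp ^ 2) * C_inv_one_sub_mul hη

lemma H1_sq_add_H1_mul_H2_add_H2_sq (hη : η ^ 2 + η + 1 = 0) :
    H1 η ^ 2 + H1 η * H2 η + H2 η ^ 2 = Xp ^ 2 * Yp * (Xp - Yp) := by
  have hC : C η ^ 2 + C η + 1 = (0 : MvPolynomial (Fin 2) ℂ) := by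
    rw [← map_pow, ← map_add, ← map_one C, ← map_add, hη, map_zero]
  have hk := C_inv_one_sub_mul (ne_one_of_sq_add_self_add_one hη)
  unfold H1 H2
  linear_combination ((C (1 - η)⁻¹ * (1 - C η) + 1) * (Xp ^ 2 * Yp * (Xp - Yp))) * hk
    + (C (1 - η)⁻¹ ^ 2 *
        (Xp ^ 4 - 2 * Xp ^ 3 * Yp + 3 * Xp ^ 2 * Yp ^ 2 - 2 * Xp * Yp ^ 3 + Yp ^ 4)) * hC

lemma H1_cube_sub_H2_cube (hη : η ^ 2 + η + 1 = 0) :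
    H1 η ^ 3 - H2 η ^ 3 = -(Xp * ∏ i, Lforms i) := by
  rw [prod_Lforms]
  linear_combination
    (H1 η ^ 2 + H1 η * H2 η + H2 η ^ 2) * H1_sub_H2 (ne_one_of_sq_add_self_add_one hη)
    + (Xp ^ 2 + Xp * Yp - Yp ^ 2) * H1_sq_add_H1_mul_H2_add_H2_sq hη
    + Xp ^ 2 * Yp * (Xp - Yp) * Yp_sub_phi_mul_Yp_sub_psi

lemma G20_cube_sub_G30_sq (hη : η ^ 2 + η + 1 = 0) :
    G20 η ^ 3 - G30 η ^ 2 = C (-(1 / 4) : ℂ) * Xp ^ 4 * Yp ^ 2 * (Xp - Yp) ^ 2 *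
      (Yp - C phi * Xp) ^ 2 * (Yp - C psi * Xp) ^ 2 := by
  have hhalf : 2 * C (2⁻¹ : ℂ) = (1 : MvPolynomial (Fin 2) ℂ) := by
    rw [← map_ofNat C 2, ← map_mul, mul_inv_cancel₀ two_ne_zero, map_one]
  have hquarter : (C (-(1 / 4) : ℂ) : MvPolynomial (Fin 2) ℂ) = -C (2⁻¹ : ℂ) ^ 2 := by
    rw [← map_pow, ← map_neg]; norm_num
  rw [G20, G30, cube_sub_sq_eq_neg_sq_mul_sq hhalf, H1_cube_sub_H2_cube hη, hquarter, prod_Lforms]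
  ring

lemma Lforms_dvd_H1_cube_sub_H2_cube (hη : η ^ 2 + η + 1 = 0) (i : Fin 5) :
    Lforms i ∣ H1 η ^ 3 - H2 η ^ 3 := by
  rw [H1_cube_sub_H2_cube hη, dvd_neg]
  exact (Finset.dvd_prod_of_mem Lforms (Finset.mem_univ i)).mul_left Xp

lemma eval_LformsRoot_H1_ne_zero (hη : η ^ 2 + η + 1 = 0) (i : Fin 5) :
    eval (LformsRoot i) (H1 η) ≠ 0 := by
  have hη₀ := ne_zero_of_sq_add_self_add_one hη
  have hinv : (1 - η)⁻¹ ≠ 0 := inv_ne_zero (sub_ne_zero.mpr (ne_one_of_sq_add_self_add_one hη).symm)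
  have golden {r : ℂ} (hr : r ^ 2 = r + 1) : 1 - η * r + η * r ^ 2 = -η ^ 2 := by
    linear_combination η * hr + hη
  fin_cases i <;> dsimp [LformsRoot] <;> rw [eval_H1] <;> refine mul_ne_zero hinv ?_
  · simpa using hη₀
  · simp
  · simp
  · simpa [golden phi_sq] using hη₀
  · simpa [golden psi_sq] using hη₀

lemma not_dvd_G20_and_not_dvd_G30 {L : MvPolynomial (Fin 2) ℂ} {v : Fin 2 → ℂ}
    (hL : L ∣ H1 η ^ 3 - H2 η ^ 3) (hv : eval v L = 0) (hH1 : eval v (H1 η) ≠ 0) :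
    ¬ L ∣ G20 η ∧ ¬ L ∣ G30 η := by
  have hcube : eval v (H1 η) ^ 3 = eval v (H2 η) ^ 3 := by
    have := map_dvd (eval v) hL
    rwa [hv, zero_dvd_iff, map_sub, map_pow, map_pow, sub_eq_zero] at this
  have hH2 : eval v (H2 η) ≠ 0 := by
    rw [← pow_ne_zero_iff three_ne_zero, ← hcube]
    exact pow_ne_zero 3 hH1
  refine ⟨not_dvd_of_eval_eq_zero hv ?_, not_dvd_of_eval_eq_zero hv ?_⟩
  · simpa [G20] using mul_ne_zero hH1 hH2
  · simp only [G30, map_mul, map_add, map_pow, eval_C, ← hcube]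
    simpa using hH1

end

/-- The explicit pair `(G₂⁰, G₃⁰)` is a Weierstrass pair of type (I4,4I2):
`G₂⁰`, `G₃⁰` are homogeneous of degrees 4 and 6, one has
`(G₂⁰)³ − (G₃⁰)² = −¼·X⁴·Y²·(X−Y)²·(Y−φX)²·(Y−ψX)²`, the five linear forms
`X, Y, X−Y, Y−φX, Y−ψX` are pairwise non-proportional, and none of them divides
`G₂⁰` or `G₃⁰`. -/
theorem normal_form_is_I4_fourI2 (η : ℂ) (hη : IsPrimitiveRoot η 3) :
    IsWeierstrassI4FourI2 (G20 η) (G30 η) ∧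
    (G20 η).IsHomogeneous 4 ∧ (G30 η).IsHomogeneous 6 ∧
    (G20 η) ^ 3 - (G30 η) ^ 2 =
      C (-(1/4) : ℂ) * Xp ^ 4 * Yp ^ 2 * (Xp - Yp) ^ 2 *
        (Yp - C phi * Xp) ^ 2 * (Yp - C psi * Xp) ^ 2 ∧
    (∀ i j, i ≠ j → ∀ t : ℂ, Lforms i ≠ t • Lforms j) ∧
    (∀ i, ¬ Lforms i ∣ G20 η ∧ ¬ Lforms i ∣ G30 η) := by
  have hη' := hη.sq_add_self_add_one
  have hdisc := G20_cube_sub_G30_sq hη'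
  have hLforms : ∀ i, (Lforms i).IsHomogeneous 1 ∧ Lforms i ≠ 0 := fun i =>
    ⟨isHomogeneous_Lforms i, by
      simpa using Lforms_not_proportional i (i + 1) (by simp) 0⟩
  have hnot_dvd : ∀ i, ¬ Lforms i ∣ G20 η ∧ ¬ Lforms i ∣ G30 η := fun i =>
    not_dvd_G20_and_not_dvd_G30 (Lforms_dvd_H1_cube_sub_H2_cube hη' i) (eval_LformsRoot i)
      (eval_LformsRoot_H1_ne_zero hη' i)
  exact ⟨⟨isHomogeneous_G20 η, isHomogeneous_G30 η, Lforms, Units.mk0 _ (by norm_num), hLforms,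
    Lforms_not_proportional, hdisc, hnot_dvd⟩, isHomogeneous_G20 η, isHomogeneous_G30 η, hdisc,
    Lforms_not_proportional, hnot_dvd⟩
end
end

section
/- (Coprimality step in the proof of Lemma 5.6.) If (G₂,G₃) is a Weierstrass pair of type (I4,4I2), then G₂ and G₃ are coprime in ℂ[X,Y] (every common divisor is a unit); moreover, for any homogeneous D ∈ ℂ[X,Y] with D² = −(G₂³ − G₃²), the polynomials G₃ − D and G₃ + D are coprime in ℂ[X,Y]. -/
open MvPolynomial

noncomputable section

/-!
The linear forms `Lᵢ` are irreducible and do not divide `G₂`, so `G₂` is coprime to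
`G₂³ − G₃² = u·L₁⁴L₂²L₃²L₄²L₅²`, and a common divisor of `G₂` and `G₃` divides both.
For the second claim, `(G₃ − D)(G₃ + D) = G₃² − D² = G₂³` and `(G₃ − D) + (G₃ + D) = 2G₃`,
so a common divisor of `G₃ ∓ D` divides both `G₂³` and `G₃` (as `2` is a unit).
-/

theorem MvPolynomial.irreducible_of_isHomogeneous_one {σ K : Type*} [Field K]
    {p : MvPolynomial σ K} (hp : p.IsHomogeneous 1) (hp0 : p ≠ 0) : Irreducible p := by
  refine irreducible_of_totalDegree_eq_one (hp.totalDegree hp0) fun x hx => ?_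
  refine isUnit_iff_ne_zero.mpr fun hx0 => hp0 (MvPolynomial.ext _ _ fun i => ?_)
  simpa [hx0] using hx i

section IsRelPrime

variable {α ι : Type*}

theorem isRelPrime_unit_mul_prod_pow [CommMonoid α] [DecompositionMonoid α]
    {a u : α} {s : Finset ι} {L : ι → α} (k : ι → ℕ) (hu : IsUnit u)
    (hL : ∀ i ∈ s, Irreducible (L i)) (hLa : ∀ i ∈ s, ¬ L i ∣ a) :
    IsRelPrime a (u * ∏ i ∈ s, L i ^ k i) :=
  (isRelPrime_mul_unit_left_right hu).mpr <| IsRelPrime.prod_right fun i hi =>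
    (((hL i hi).isRelPrime_iff_not_dvd.mpr (hLa i hi)).symm).pow_right

theorem IsRelPrime.of_pow_sub_pow [CommRing α] {a b : α} {m n : ℕ} (hm : m ≠ 0) (hn : n ≠ 0)
    (h : IsRelPrime a (a ^ m - b ^ n)) : IsRelPrime a b :=
  fun _ hda hdb => h hda (dvd_sub (dvd_pow hda hm) (dvd_pow hdb hn))

theorem IsRelPrime.sub_add_of_sq_eq [CommRing α] [DecompositionMonoid α] {a b c : α} {n : ℕ}
    (h2 : IsUnit (2 : α)) (hab : IsRelPrime a b) (hc : c ^ 2 = b ^ 2 - a ^ n) :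
    IsRelPrime (b - c) (b + c) := by
  have hprod : (b - c) * (b + c) = a ^ n := by linear_combination -hc
  have hsum : (b - c) + (b + c) = 2 * b := by ring
  have key : IsRelPrime (a ^ n) (2 * b) :=
    (isRelPrime_mul_unit_left_right h2).mpr hab.pow_left
  intro d hd₁ hd₂
  exact key (hprod ▸ dvd_mul_of_dvd_left hd₁ _) (hsum ▸ dvd_add hd₁ hd₂)

end IsRelPrime

theorem IsWeierstrassI4FourI2.isRelPrime {G₂ G₃ : MvPolynomial (Fin 2) ℂ}
    (h : IsWeierstrassI4FourI2 G₂ G₃) : IsRelPrime G₂ G₃ := by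
  obtain ⟨-, -, L, u, hL, -, heq, hLG⟩ := h
  have hprod : G₂ ^ 3 - G₃ ^ 2 = C (u : ℂ) * ∏ i, L i ^ (![4, 2, 2, 2, 2] : Fin 5 → ℕ) i := by
    rw [heq, Fin.prod_univ_five]
    simp only [Matrix.cons_val]
    ring
  refine IsRelPrime.of_pow_sub_pow three_ne_zero two_ne_zero ?_
  rw [hprod]
  exact isRelPrime_unit_mul_prod_pow _ (u.isUnit.map C)
    (fun i _ => irreducible_of_isHomogeneous_one (hL i).1 (hL i).2) fun i _ => (hLG i).1

/-- If `(G₂,G₃)` is a Weierstrass pair of type (I4,4I2), then `G₂` and `G₃` are coprime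
(every common divisor is a unit); moreover, for any homogeneous `D` with
`D² = −(G₂³ − G₃²)`, the polynomials `G₃ − D` and `G₃ + D` are coprime. -/
theorem coprimality_step (G₂ G₃ : MvPolynomial (Fin 2) ℂ)
    (h : IsWeierstrassI4FourI2 G₂ G₃) :
    (∀ d : MvPolynomial (Fin 2) ℂ, d ∣ G₂ → d ∣ G₃ → IsUnit d) ∧
    ∀ D : MvPolynomial (Fin 2) ℂ, (∃ n, D.IsHomogeneous n) →
      D ^ 2 = -(G₂ ^ 3 - G₃ ^ 2) →
      ∀ d : MvPolynomial (Fin 2) ℂ, d ∣ G₃ - D → d ∣ G₃ + D → IsUnit d := by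
  have h2 : IsUnit (2 : MvPolynomial (Fin 2) ℂ) :=
    map_ofNat (C : ℂ →+* _) 2 ▸ (isUnit_iff_ne_zero.mpr two_ne_zero).map C
  refine ⟨fun _ hd₂ hd₃ => h.isRelPrime hd₂ hd₃, fun D _ hD _ hd hd' => ?_⟩
  exact IsRelPrime.sub_add_of_sq_eq (n := 3) h2 h.isRelPrime (by rw [hD]; ring) hd hd'
end
end

section
/- (Claim 5.11, with the fixed-point hypotheses made explicit.) Let A be an invertible 3×3 complex matrix such that (i) F(A·v) = 0 for every v ∈ ℂ³ with F(v) = 0, (ii) A·(0,0,1) is a scalar multiple of (0,0,1), and (iii) A·(1,0,−1) is a scalar multiple of (1,0,−1). Then there exists μ ∈ ℂˣ such that A = μ·diag(1,1,1) or A = μ·diag(1,−1,1); i.e. the induced automorphism of ℙ²(ℂ) is [X:Y:Z] ↦ [X:Y:Z] or [X:Y:Z] ↦ [X:−Y:Z]. -/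
open MvPolynomial

noncomputable section

/-- `F = Y²Z − X³ − X²Z`, the equation of the nodal plane cubic
`C : Y²Z = X²(X+Z)` in `ℙ²(ℂ)`. -/
def F : MvPolynomial (Fin 3) ℂ := X 1 ^ 2 * X 2 - X 0 ^ 3 - X 0 ^ 2 * X 2

lemma evalF (v : Fin 3 → ℂ) : eval v F = v 1 ^ 2 * v 2 - v 0 ^ 3 - v 0 ^ 2 * v 2 := by
  simp [F]

lemma solve_system (a b e h t : ℂ) (ha : a ≠ 0) (he : e ≠ 0)
    (hE : ∀ u : ℂ,
      (e * (u * (u ^ 2 - 1))) ^ 2 *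
          ((t - a) * (u ^ 2 - 1) + h * (u * (u ^ 2 - 1)) + t)
        - (a * (u ^ 2 - 1) + b * (u * (u ^ 2 - 1))) ^ 3
        - (a * (u ^ 2 - 1) + b * (u * (u ^ 2 - 1))) ^ 2 *
            ((t - a) * (u ^ 2 - 1) + h * (u * (u ^ 2 - 1)) + t) = 0) :
    b = 0 ∧ h = 0 ∧ t = a ∧ (e = a ∨ e = -a) := by
  have E1 := hE 2
  have E2 := hE (-2)
  have E3 := hE 3
  have E4 := hE (-3)
  have E5 := hE 4
  have E6 := hE (-4)
  have E7 := hE 5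
  have E8 := hE (-5)
  have E9 := hE 6
  have ha2 : a ^ 2 ≠ 0 := pow_ne_zero _ ha
  have he2 : e ^ 2 ≠ 0 := pow_ne_zero _ he
  have hc1 : a ^ 2 * (h + b) = 0 := by
    linear_combination (15/14 : ℂ) * E1 + (-15/28 : ℂ) * E2 + (-20/21 : ℂ) * E3 +
      (20/63 : ℂ) * E4 + (25/56 : ℂ) * E5 + (-5/56 : ℂ) * E6 + (-4/35 : ℂ) * E7 +
      (4/385 : ℂ) * E8 + (5/396 : ℂ) * E9
  have hhb : h = -b := by
    have h0 := (mul_eq_zero.mp hc1).resolve_left ha2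
    linear_combination h0
  have hc9 : e ^ 2 * h - b ^ 2 * h - b ^ 3 = 0 := by
    linear_combination (1/40320 : ℂ) * E1 + (1/80640 : ℂ) * E2 + (-1/30240 : ℂ) * E3 +
      (-1/90720 : ℂ) * E4 + (1/48384 : ℂ) * E5 + (1/241920 : ℂ) * E6 +
      (-1/151200 : ℂ) * E7 + (-1/1663200 : ℂ) * E8 + (1/1140480 : ℂ) * E9
  have hb : b = 0 := by
    have hkey : e ^ 2 * b = 0 := by
      linear_combination -hc9 + (e ^ 2 - b ^ 2) * hhb
    exact (mul_eq_zero.mp hkey).resolve_left he2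
  have hh : h = 0 := by rw [hhb, hb, neg_zero]
  have hc8 : e ^ 2 * t - b ^ 2 * t - a * e ^ 2 - 2 * a * b * h - 2 * a * b ^ 2 = 0 := by
    linear_combination (-1/10080 : ℂ) * E1 + (-1/10080 : ℂ) * E2 + (1/10080 : ℂ) * E3 +
      (1/10080 : ℂ) * E4 + (-1/24192 : ℂ) * E5 + (-1/24192 : ℂ) * E6 +
      (1/151200 : ℂ) * E7 + (1/151200 : ℂ) * E8
  have hta : t = a := by
    have hkey : e ^ 2 * (t - a) = 0 := by
      linear_combination hc8 + (b * t + 2 * a * b) * hb + 2 * a * b * hh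
    have := (mul_eq_zero.mp hkey).resolve_left he2
    linear_combination this
  have hc2 : a * e ^ 2 + 2 * a * b * h + 2 * a * b ^ 2 - a ^ 2 * t = 0 := by
    linear_combination (5/14 : ℂ) * E1 + (5/14 : ℂ) * E2 + (-10/63 : ℂ) * E3 +
      (-10/63 : ℂ) * E4 + (25/672 : ℂ) * E5 + (25/672 : ℂ) * E6 +
      (-2/525 : ℂ) * E7 + (-2/525 : ℂ) * E8
  have hea : (e - a) * (e + a) = 0 := by
    have hkey : a * ((e - a) * (e + a)) = 0 := by
      linear_combination hc2 + a ^ 2 * hta - (2 * a * h + 2 * a * b) * hb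
    exact (mul_eq_zero.mp hkey).resolve_left ha
  refine ⟨hb, hh, hta, ?_⟩
  rcases mul_eq_zero.mp hea with h1 | h1
  · left; linear_combination h1
  · right; linear_combination h1

/-- Claim 5.11: if an invertible `3×3` complex matrix `A` maps the affine cone over the
nodal cubic `C` into itself, and the induced automorphism of `ℙ²(ℂ)` fixes the points
`[0:0:1]` and `[1:0:−1]`, then `A` is a scalar multiple of `diag(1,1,1)` or of
`diag(1,−1,1)`; i.e. the induced automorphism is `[X:Y:Z] ↦ [X:Y:Z]` or
`[X:Y:Z] ↦ [X:−Y:Z]`. -/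
theorem claim_5_11 (A : Matrix (Fin 3) (Fin 3) ℂ) (hA : IsUnit A.det)
    (hC : ∀ v : Fin 3 → ℂ, eval v F = 0 → eval (A.mulVec v) F = 0)
    (hfix1 : ∃ t : ℂ, A.mulVec ![0, 0, 1] = t • ![0, 0, 1])
    (hfix2 : ∃ s : ℂ, A.mulVec ![1, 0, -1] = s • ![1, 0, -1]) :
    ∃ μ : ℂˣ, A = (μ : ℂ) • (1 : Matrix (Fin 3) (Fin 3) ℂ) ∨
      A = (μ : ℂ) • Matrix.diagonal ![1, -1, 1] := by
  obtain ⟨t, ht⟩ := hfix1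
  obtain ⟨s, hs⟩ := hfix2
  have e02 : A 0 2 = 0 := by
    have := congrFun ht 0
    simpa [Matrix.mulVec, dotProduct, Fin.sum_univ_three] using this
  have e12 : A 1 2 = 0 := by
    have := congrFun ht 1
    simpa [Matrix.mulVec, dotProduct, Fin.sum_univ_three] using this
  have e22 : A 2 2 = t := by
    have := congrFun ht 2
    simpa [Matrix.mulVec, dotProduct, Fin.sum_univ_three] using this
  have e00 : A 0 0 = s := by
    have := congrFun hs 0
    simpa [Matrix.mulVec, dotProduct, Fin.sum_univ_three, e02] using this
  have e10 : A 1 0 = 0 := by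
    have := congrFun hs 1
    simpa [Matrix.mulVec, dotProduct, Fin.sum_univ_three, e12] using this
  have e20 : A 2 0 = t - A 0 0 := by
    have := congrFun hs 2
    simp [Matrix.mulVec, dotProduct, Fin.sum_univ_three, e22] at this
    rw [e00]
    linear_combination this
  set a := A 0 0 with ha_def
  set b := A 0 1 with hb_def
  set e := A 1 1 with he_def
  set hh := A 2 1 with hh_def
  have hdet : A.det = a * e * t := by
    rw [Matrix.det_fin_three, e02, e12, e22, e10, e20]
    ring
  have hdet0 : a * e * t ≠ 0 := by
    rw [← hdet]; exact hA.ne_zero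
  have ha0 : a ≠ 0 := fun h => hdet0 (by rw [h]; ring)
  have he0 : e ≠ 0 := fun h => hdet0 (by rw [h]; ring)
  have ht0 : t ≠ 0 := fun h => hdet0 (by rw [h]; ring)
  have hE : ∀ u : ℂ,
      (e * (u * (u ^ 2 - 1))) ^ 2 *
          ((t - a) * (u ^ 2 - 1) + hh * (u * (u ^ 2 - 1)) + t)
        - (a * (u ^ 2 - 1) + b * (u * (u ^ 2 - 1))) ^ 3
        - (a * (u ^ 2 - 1) + b * (u * (u ^ 2 - 1))) ^ 2 *
            ((t - a) * (u ^ 2 - 1) + hh * (u * (u ^ 2 - 1)) + t) = 0 := by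
    intro u
    have hmem : eval ![u ^ 2 - 1, u * (u ^ 2 - 1), 1] F = 0 := by
      rw [evalF]; simp; ring
    have := hC _ hmem
    rw [evalF] at this
    simp only [Matrix.mulVec, dotProduct, Fin.sum_univ_three, Matrix.cons_val_zero,
      Matrix.cons_val_one, Matrix.head_cons, Matrix.cons_val_two, Matrix.tail_cons] at this
    rw [e02, e12, e22, e10, e20] at this
    linear_combination this
  obtain ⟨hb0, hh0, hta, hepm⟩ := solve_system a b e hh t ha0 he0 hE
  rw [hb_def] at hb0
  rw [hh_def] at hh0
  have h22 : A 2 2 = A 0 0 := by rw [e22, hta, ha_def]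
  have h20 : A 2 0 = 0 := by rw [e20, hta]; ring
  refine ⟨Units.mk0 a ha0, ?_⟩
  rcases hepm with hea | hea
  · left
    rw [he_def, ha_def] at hea
    ext i j
    fin_cases i <;> fin_cases j <;>
      simp [Matrix.one_apply, hb0, hh0, e02, e12, e10, h20, hea, h22, ha_def]
  · right
    rw [he_def, ha_def] at hea
    ext i j
    fin_cases i <;> fin_cases j <;>
      simp [Matrix.diagonal, hb0, hh0, e02, e12, e10, h20, hea, h22, ha_def]
end
end

section
/- (Computational core of the proof of Claim 5.11.) Let a, b, c, d ∈ ℂ with b ≠ 0 and d ≠ 0 (equivalently, the matrix with rows (d,a,0), (0,b,0), (1−d,c,1) is invertible). Suppose that for every (x,y,z) ∈ ℂ³ with y²z = x²(x+z) one has b²y²·((1−d)x + cy + z) = (dx + ay)²·(x + (a+c)y + z). Then a = 0, c = 0, d = 1 and b² = 1. -/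
/-- Computational core of the proof of Claim 5.11: if `b ≠ 0`, `d ≠ 0` and the linear
map `(X,Y,Z) ↦ (dX+aY, bY, (1−d)X+cY+Z)` maps points of the nodal cubic
`y²z = x²(x+z)` to points of it — i.e.
`b²y²·((1−d)x + cy + z) = (dx + ay)²·(x + (a+c)y + z)` whenever `y²z = x²(x+z)` —
then `a = 0`, `c = 0`, `d = 1` and `b² = 1`. -/
theorem claim_5_11_core (a b c d : ℂ) (hb : b ≠ 0) (hd : d ≠ 0)
    (h : ∀ x y z : ℂ, y ^ 2 * z = x ^ 2 * (x + z) →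
      b ^ 2 * y ^ 2 * ((1 - d) * x + c * y + z) =
        (d * x + a * y) ^ 2 * (x + (a + c) * y + z)) :
    a = 0 ∧ c = 0 ∧ d = 1 ∧ b ^ 2 = 1 := by
  have e2 := h 3 6 1 (by norm_num)
  have e3 := h 8 24 1 (by norm_num)
  have e4 := h 15 60 1 (by norm_num)
  have e5 := h 24 120 1 (by norm_num)
  have e6 := h 35 210 1 (by norm_num)
  -- values of the quartic G(t) = b²·t·M(t) − (d+ta)²·(t+(t²−1)(a+c)) at t = 2,…,6
  have g2 : b ^ 2 * 2 * (3 * (1 - d) + 6 * c + 1) - (d + 2 * a) ^ 2 * (2 + 3 * (a + c)) = 0 := by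
    linear_combination e2 / 18
  have g3 : b ^ 2 * 3 * (8 * (1 - d) + 24 * c + 1) - (d + 3 * a) ^ 2 * (3 + 8 * (a + c)) = 0 := by
    linear_combination e3 / 192
  have g4 : b ^ 2 * 4 * (15 * (1 - d) + 60 * c + 1) - (d + 4 * a) ^ 2 * (4 + 15 * (a + c)) = 0 := by
    linear_combination e4 / 900
  have g5 : b ^ 2 * 5 * (24 * (1 - d) + 120 * c + 1) - (d + 5 * a) ^ 2 * (5 + 24 * (a + c)) = 0 := by
    linear_combination e5 / 2880
  have g6 : b ^ 2 * 6 * (35 * (1 - d) + 210 * c + 1) - (d + 6 * a) ^ 2 * (6 + 35 * (a + c)) = 0 := by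
    linear_combination e6 / 7350
  -- coefficients of G (Lagrange / inverse Vandermonde at nodes 2..6)
  have A0 : d ^ 2 * (a + c) = 0 := by
    linear_combination 15 * g2 - 40 * g3 + 45 * g4 - 24 * g5 + 5 * g6
  have A1 : b ^ 2 * d + 2 * a * d * (a + c) - d ^ 2 = 0 := by
    linear_combination (-57 / 4 : ℂ) * g2 + (134 / 3 : ℂ) * g3 - 54 * g4 + 30 * g5
      - (77 / 12 : ℂ) * g6
  have A3 : b ^ 2 * (1 - d) - a ^ 2 - 2 * a * d * (a + c) = 0 := by
    linear_combination (-3 / 4 : ℂ) * g2 + (17 / 6 : ℂ) * g3 - 4 * g4 + (5 / 2 : ℂ) * g5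
      - (7 / 12 : ℂ) * g6
  have A4 : b ^ 2 * c - a ^ 2 * (a + c) = 0 := by
    linear_combination (1 / 24 : ℂ) * g2 - (1 / 6 : ℂ) * g3 + (1 / 4 : ℂ) * g4
      - (1 / 6 : ℂ) * g5 + (1 / 24 : ℂ) * g6
  have hac : a + c = 0 := by
    rcases mul_eq_zero.mp A0 with h0 | h0
    · exact absurd (pow_eq_zero_iff two_ne_zero |>.mp h0) hd
    · exact h0
  have hc : c = 0 := by
    have hbc : b ^ 2 * c = 0 := by linear_combination A4 + a ^ 2 * hac
    rcases mul_eq_zero.mp hbc with h0 | h0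
    · exact absurd (pow_eq_zero_iff two_ne_zero |>.mp h0) hb
    · exact h0
  have ha : a = 0 := by linear_combination hac - hc
  have hd1 : d = 1 := by
    have hbd : b ^ 2 * (1 - d) = 0 := by
      linear_combination A3 + (a + 2 * d * (a + c)) * ha
    rcases mul_eq_zero.mp hbd with h0 | h0
    · exact absurd (pow_eq_zero_iff two_ne_zero |>.mp h0) hb
    · linear_combination -h0
  refine ⟨ha, hc, hd1, ?_⟩
  subst hd1
  linear_combination A1 - 2 * (a + c) * ha
end

section
/- (Vanishing lemma used in the proof of Claim 5.11.) If g ∈ ℂ[X,Y,Z] is homogeneous of degree 2 and g(x,y,z) = 0 for every (x,y,z) ∈ ℂ³ with F(x,y,z) = 0, then g = 0. -/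
open MvPolynomial

noncomputable section

open Finsupp in
lemma Finsupp.exists_eq_single_add_single_add_single (m : Fin 3 →₀ ℕ) :
    ∃ a b c, m = single 0 a + single 1 b + single 2 c :=
  ⟨m 0, m 1, m 2, by ext i; fin_cases i <;> simp⟩

open Finsupp in
lemma Finsupp.degree_eq_two_fin_three {m : Fin 3 →₀ ℕ} (hm : m.degree = 2) :
    m = single 0 2 ∨ m = single 1 2 ∨ m = single 2 2 ∨
      m = single 0 1 + single 1 1 ∨ m = single 0 1 + single 2 1 ∨
      m = single 1 1 + single 2 1 := by
  obtain ⟨a, b, c, rfl⟩ := m.exists_eq_single_add_single_add_single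
  simp only [map_add, degree_single] at hm
  rcases (by omega : a = 2 ∧ b = 0 ∧ c = 0 ∨ a = 0 ∧ b = 2 ∧ c = 0 ∨ a = 0 ∧ b = 0 ∧ c = 2 ∨
      a = 1 ∧ b = 1 ∧ c = 0 ∨ a = 1 ∧ b = 0 ∧ c = 1 ∨ a = 0 ∧ b = 1 ∧ c = 1) with
    ⟨rfl, rfl, rfl⟩ | ⟨rfl, rfl, rfl⟩ | ⟨rfl, rfl, rfl⟩ | ⟨rfl, rfl, rfl⟩ | ⟨rfl, rfl, rfl⟩ |
    ⟨rfl, rfl, rfl⟩ <;> simp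

namespace MvPolynomial

variable {σ R : Type*} [CommSemiring R]

lemma IsHomogeneous.eq_of_coeff_eq {p q : MvPolynomial σ R} {n : ℕ}
    (hp : p.IsHomogeneous n) (hq : q.IsHomogeneous n)
    (h : ∀ m : σ →₀ ℕ, m.degree = n → coeff m p = coeff m q) : p = q := by
  ext m
  by_cases hm : m.degree = n
  · exact h m hm
  · rw [hp.coeff_eq_zero hm, hq.coeff_eq_zero hm]

open Finsupp in
lemma IsHomogeneous.eq_ternary_quadratic {g : MvPolynomial (Fin 3) R} (hg : g.IsHomogeneous 2) :
    g = C (coeff (single 0 2) g) * X 0 ^ 2 + C (coeff (single 1 2) g) * X 1 ^ 2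
      + C (coeff (single 2 2) g) * X 2 ^ 2 + C (coeff (single 0 1 + single 1 1) g) * X 0 * X 1
      + C (coeff (single 0 1 + single 2 1) g) * X 0 * X 2
      + C (coeff (single 1 1 + single 2 1) g) * X 1 * X 2 := by
  refine hg.eq_of_coeff_eq ?_ fun m hm => ?_
  · have hsq (i : Fin 3) (r : R) := isHomogeneous_C_mul_X_pow r i 2
    have hprod (i j : Fin 3) (r : R) := (isHomogeneous_C_mul_X r i).mul (isHomogeneous_X R j)
    exact (((((hsq 0 _).add (hsq 1 _)).add (hsq 2 _)).add (hprod 0 1 _)).add (hprod 0 2 _)).add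
      (hprod 1 2 _)
  · rcases degree_eq_two_fin_three hm with rfl | rfl | rfl | rfl | rfl | rfl <;>
      simp [mul_assoc, coeff_X_pow, coeff_X_mul', coeff_X, Finsupp.ext_iff, Fin.forall_fin_succ,
        single_apply]

end MvPolynomial

-- The six points are the images of `t = ±1, 0, ±2, 3` under `t ↦ (t² - 1, t(t² - 1), 1)`,
-- together with the point at infinity `(0 : 1 : 0)`; no conic passes through all of them.
lemma ternary_quadratic_eq_zero_of_vanishing_on_nodal_cubic {K : Type*} [Field K] [CharZero K]
    {a b c d e f : K}
    (h : ∀ x y z : K, y ^ 2 * z - x ^ 3 - x ^ 2 * z = 0 →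
      a * x ^ 2 + b * y ^ 2 + c * z ^ 2 + d * x * y + e * x * z + f * y * z = 0) :
    a = 0 ∧ b = 0 ∧ c = 0 ∧ d = 0 ∧ e = 0 ∧ f = 0 := by
  have h₁ := h 0 0 1 (by ring)
  have h₂ := h 0 1 0 (by ring)
  have h₃ := h (-1) 0 1 (by ring)
  have h₄ := h 3 6 1 (by ring)
  have h₅ := h 3 (-6) 1 (by ring)
  have h₆ := h 8 24 1 (by ring)
  have hb : b = 0 := by linear_combination h₂
  have hc : c = 0 := by linear_combination h₁
  have ha : a = 0 := by linear_combination (h₄ + h₅ - 72 * h₂ - 8 * h₁ + 6 * h₃) / 24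
  have he : e = 0 := by linear_combination ha + h₁ - h₃
  have hd : d = 0 := by
    linear_combination (h₆ - 2 * (h₄ - h₅) - 64 * ha - 576 * hb - hc - 8 * he) / 120
  have hf : f = 0 := by linear_combination (h₄ - h₅ - 36 * hd) / 12
  exact ⟨ha, hb, hc, hd, he, hf⟩

/-- Vanishing lemma: if `g ∈ ℂ[X,Y,Z]` is homogeneous of degree 2 and vanishes at every
point of the affine cone over the nodal cubic `C`, then `g = 0`. -/
theorem quadric_vanishing_on_nodal_cubic (g : MvPolynomial (Fin 3) ℂ)
    (hg : g.IsHomogeneous 2)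
    (hvan : ∀ v : Fin 3 → ℂ, eval v F = 0 → eval v g = 0) :
    g = 0 := by
  obtain ⟨ha, hb, hc, hd, he, hf⟩ := ternary_quadratic_eq_zero_of_vanishing_on_nodal_cubic
    fun x y z hxyz => by
      have hg₀ := hvan ![x, y, z] (by simpa [F] using hxyz)
      rw [hg.eq_ternary_quadratic] at hg₀
      simpa using hg₀
  rw [hg.eq_ternary_quadratic, ha, hb, hc, hd, he, hf]
  simp
end
end

section
/- (Linear maps preserving the nodal cubic rescale its equation.) If A is an invertible 3×3 complex matrix such that F(A·v) = 0 for every v ∈ ℂ³ with F(v) = 0, then there exists λ ∈ ℂˣ such that F(A·v) = λ·F(v) for all v ∈ ℂ³ (equivalently, the polynomial obtained from F by the linear substitution A equals λ·F). -/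
open MvPolynomial

noncomputable section

/-- If an invertible `3×3` complex matrix `A` maps the affine cone over the nodal cubic
`C` into itself, then `F(A·v) = λ·F(v)` for some `λ ∈ ℂˣ` and all `v ∈ ℂ³`. -/
theorem linear_map_preserving_nodal_cubic_rescales
    (A : Matrix (Fin 3) (Fin 3) ℂ) (hA : IsUnit A.det)
    (hC : ∀ v : Fin 3 → ℂ, eval v F = 0 → eval (A.mulVec v) F = 0) :
    ∃ lam : ℂˣ, ∀ v : Fin 3 → ℂ, eval (A.mulVec v) F = (lam : ℂ) * eval v F := by
  have key : ∀ v : Fin 3 → ℂ, eval (A.mulVec v) F =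
      (A 0 0 ^ 3 + A 0 0 ^ 2 * A 2 0 - A 1 0 ^ 2 * A 2 0) * eval v F := by
    have hq := hC ![0, 1, 0] (by simp [F])
    have h0 := hC ![-1, 0, 1] (by simp [F]; ring)
    have h2 := hC ![3, 6, 1] (by simp [F]; norm_num)
    have h3 := hC ![8, 24, 1] (by simp [F]; norm_num)
    have h4 := hC ![15, 60, 1] (by simp [F]; norm_num)
    have h5 := hC ![24, 120, 1] (by simp [F]; norm_num)
    have h6 := hC ![35, 210, 1] (by simp [F]; norm_num)
    have h7 := hC ![48, 336, 1] (by simp [F]; norm_num)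
    have h8 := hC ![63, 504, 1] (by simp [F]; norm_num)
    intro v
    simp only [F, map_sub, map_mul, map_pow, eval_X, Matrix.mulVec, dotProduct,
      Fin.sum_univ_three, Matrix.cons_val_zero, Matrix.cons_val_one, Matrix.head_cons,
      Matrix.cons_val_two, Matrix.tail_cons] at hq h0 h2 h3 h4 h5 h6 h7 h8 ⊢
    linear_combination
      (((17793 : ℂ)/37)*v 0*v 0*v 1 + ((-1428840 : ℂ)/37)*v 0*v 0*v 2 + ((-1260 : ℂ)/37)*v 0*v 1*v 1 + ((594081 : ℂ)/37)*v 0*v 1*v 2 + ((-1791720 : ℂ)/37)*v 0*v 2*v 2 + ((1 : ℂ)/1)*v 1*v 1*v 1 + ((-134820 : ℂ)/37)*v 1*v 1*v 2 + ((1987488 : ℂ)/37)*v 1*v 2*v 2 + ((-362880 : ℂ)/37)*v 2*v 2*v 2) * hq +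
      (((33 : ℂ)/41440)*v 0*v 0*v 1 + ((-105 : ℂ)/296)*v 0*v 0*v 2 + ((-1 : ℂ)/42624)*v 0*v 1*v 1 + ((3487 : ℂ)/41440)*v 0*v 1*v 2 + ((-329 : ℂ)/296)*v 0*v 2*v 2 + ((-53 : ℂ)/4736)*v 1*v 1*v 2 + ((17721 : ℂ)/20720)*v 1*v 2*v 2 + ((9 : ℂ)/37)*v 2*v 2*v 2) * h0 +
      (((-209 : ℂ)/26640)*v 0*v 0*v 1 + ((280 : ℂ)/111)*v 0*v 0*v 2 + ((13 : ℂ)/53280)*v 0*v 1*v 1 + ((-18557 : ℂ)/26640)*v 0*v 1*v 2 + ((532 : ℂ)/111)*v 0*v 2*v 2 + ((5461 : ℂ)/53280)*v 1*v 1*v 2 + ((-10769 : ℂ)/2220)*v 1*v 2*v 2 + ((84 : ℂ)/37)*v 2*v 2*v 2) * h2 +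
      (((197 : ℂ)/8880)*v 0*v 0*v 1 + ((-3535 : ℂ)/592)*v 0*v 0*v 2 + ((-19 : ℂ)/26640)*v 0*v 1*v 1 + ((2641 : ℂ)/1480)*v 0*v 1*v 2 + ((-5551 : ℂ)/592)*v 0*v 2*v 2 + ((-411 : ℂ)/1480)*v 1*v 1*v 2 + ((30603 : ℂ)/2960)*v 1*v 2*v 2 + ((-126 : ℂ)/37)*v 2*v 2*v 2) * h3 +
      (((-85 : ℂ)/2664)*v 0*v 0*v 1 + ((16429 : ℂ)/2220)*v 0*v 0*v 2 + ((113 : ℂ)/106560)*v 0*v 1*v 1 + ((-782 : ℂ)/333)*v 0*v 1*v 2 + ((23989 : ℂ)/2220)*v 0*v 2*v 2 + ((40877 : ℂ)/106560)*v 1*v 1*v 2 + ((-10709 : ℂ)/888)*v 1*v 2*v 2 + ((126 : ℂ)/37)*v 2*v 2*v 2) * h4 +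
      (((727 : ℂ)/26640)*v 0*v 0*v 1 + ((-9919 : ℂ)/1776)*v 0*v 0*v 2 + ((-5 : ℂ)/5328)*v 0*v 1*v 1 + ((24689 : ℂ)/13320)*v 0*v 1*v 2 + ((-13951 : ℂ)/1776)*v 0*v 2*v 2 + ((-841 : ℂ)/2664)*v 1*v 1*v 2 + ((78041 : ℂ)/8880)*v 1*v 2*v 2 + ((-84 : ℂ)/37)*v 2*v 2*v 2) * h5 +
      (((-25 : ℂ)/1776)*v 0*v 0*v 1 + ((3361 : ℂ)/1295)*v 0*v 0*v 2 + ((187 : ℂ)/372960)*v 0*v 1*v 1 + ((-527 : ℂ)/592)*v 0*v 1*v 2 + ((4621 : ℂ)/1295)*v 0*v 2*v 2 + ((6507 : ℂ)/41440)*v 1*v 1*v 2 + ((-591 : ℂ)/148)*v 1*v 2*v 2 + ((36 : ℂ)/37)*v 2*v 2*v 2) * h6 +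
      (((379 : ℂ)/93240)*v 0*v 0*v 1 + ((-305 : ℂ)/444)*v 0*v 0*v 2 + ((-1 : ℂ)/6660)*v 0*v 1*v 1 + ((11261 : ℂ)/46620)*v 0*v 1*v 2 + ((-413 : ℂ)/444)*v 0*v 2*v 2 + ((-73 : ℂ)/1665)*v 1*v 1*v 2 + ((32341 : ℂ)/31080)*v 1*v 2*v 2 + ((-9 : ℂ)/37)*v 2*v 2*v 2) * h7 +
      (((-3 : ℂ)/5920)*v 0*v 0*v 1 + ((165 : ℂ)/2072)*v 0*v 0*v 2 + ((29 : ℂ)/1491840)*v 0*v 1*v 1 + ((-169 : ℂ)/5920)*v 0*v 1*v 2 + ((221 : ℂ)/2072)*v 0*v 2*v 2 + ((7913 : ℂ)/1491840)*v 1*v 1*v 2 + ((-353 : ℂ)/2960)*v 1*v 2*v 2 + ((1 : ℂ)/37)*v 2*v 2*v 2) * h8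
  have hmul := Matrix.mul_nonsing_inv A hA
  have hv : A.mulVec ((A⁻¹).mulVec ![1, 0, 0]) = ![1, 0, 0] := by
    rw [Matrix.mulVec_mulVec, hmul, Matrix.one_mulVec]
  have h1 := key ((A⁻¹).mulVec ![1, 0, 0])
  rw [hv] at h1
  have he : eval ![1, 0, 0] F = -1 := by simp [F]
  rw [he] at h1
  have hlam : (A 0 0 ^ 3 + A 0 0 ^ 2 * A 2 0 - A 1 0 ^ 2 * A 2 0) ≠ 0 := by
    intro h
    rw [h, zero_mul] at h1
    norm_num at h1
  exact ⟨Units.mk0 _ hlam, key⟩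
end
end

section
/- (The singular point is preserved; asserted in the proof of Claim 5.11.) If A is an invertible 3×3 complex matrix such that F(A·v) = 0 for every v ∈ ℂ³ with F(v) = 0, then A·(0,0,1) is a scalar multiple of (0,0,1); i.e. the induced automorphism of ℙ²(ℂ) fixes the singular point [0:0:1] of C. -/
open MvPolynomial

noncomputable section

/-- If an invertible `3×3` complex matrix `A` maps the affine cone over the nodal cubic
`C` into itself, then `A·(0,0,1)` is a scalar multiple of `(0,0,1)`; i.e. the induced
automorphism of `ℙ²(ℂ)` fixes the singular point `[0:0:1]` of `C`. -/
theorem singular_point_preserved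
    (A : Matrix (Fin 3) (Fin 3) ℂ) (hA : IsUnit A.det)
    (hC : ∀ v : Fin 3 → ℂ, eval v F = 0 → eval (A.mulVec v) F = 0) :
    ∃ t : ℂ, A.mulVec ![0, 0, 1] = t • ![0, 0, 1] := by
  have hmv : ∀ (w : Fin 3 → ℂ) (i : Fin 3),
      A.mulVec w i = A i 0 * w 0 + A i 1 * w 1 + A i 2 * w 2 := by
    intro w i
    simp [Matrix.mulVec, dotProduct, Fin.sum_univ_three]
  have h : ∀ c0 c1 c2 : ℂ, c1 ^ 2 * c2 - c0 ^ 3 - c0 ^ 2 * c2 = 0 →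
      (A 1 0 * c0 + A 1 1 * c1 + A 1 2 * c2) ^ 2 * (A 2 0 * c0 + A 2 1 * c1 + A 2 2 * c2)
      - (A 0 0 * c0 + A 0 1 * c1 + A 0 2 * c2) ^ 3
      - (A 0 0 * c0 + A 0 1 * c1 + A 0 2 * c2) ^ 2
        * (A 2 0 * c0 + A 2 1 * c1 + A 2 2 * c2) = 0 := by
    intro c0 c1 c2 hc
    have h1 := hC ![c0, c1, c2] (by
      rw [evalF]
      simp only [Matrix.cons_val_zero, Matrix.cons_val_one, Matrix.head_cons,
        Matrix.cons_val_two, Matrix.tail_cons]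
      exact hc)
    rw [evalF] at h1
    simpa [hmv] using h1
  have h0 := h (-1) 0 1 (by norm_num)
  have h1 := h 0 0 1 (by norm_num)
  have h2 := h 3 6 1 (by norm_num)
  have h3 := h 3 (-6) 1 (by norm_num)
  have h4 := h 8 24 1 (by norm_num)
  have h5 := h 8 (-24) 1 (by norm_num)
  have h6 := h 15 60 1 (by norm_num)
  have h7 := h 15 (-60) 1 (by norm_num)
  have h8 := h 24 120 1 (by norm_num)
  have h9 := h 24 (-120) 1 (by norm_num)
  have hd : A.det ≠ 0 := hA.ne_zero
  have hdet : A.det = A 0 0 * A 1 1 * A 2 2 - A 0 0 * A 1 2 * A 2 1 - A 0 1 * A 1 0 * A 2 2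
      + A 0 1 * A 1 2 * A 2 0 + A 0 2 * A 1 0 * A 2 1 - A 0 2 * A 1 1 * A 2 0 := by
    rw [Matrix.det_fin_three]
  have key0 : A.det * (-3 * A 0 2 ^ 2 - 2 * A 0 2 * A 2 2) = 0 := by
    rw [hdet]
    linear_combination (((5)/8 : ℂ) * A 1 2 * A 2 1 + ((1)/8 : ℂ) * A 1 2 * A 2 0 + ((-5)/8 : ℂ) * A 1 1 * A 2 2 + ((-1)/8 : ℂ) * A 1 0 * A 2 2) * h0 + (((-19)/40 : ℂ) * A 1 2 * A 2 1 + ((-5)/24 : ℂ) * A 1 2 * A 2 0 + ((19)/40 : ℂ) * A 1 1 * A 2 2 + ((-3) : ℂ) * A 1 1 * A 2 0 + ((5)/24 : ℂ) * A 1 0 * A 2 2 + ((3) : ℂ) * A 1 0 * A 2 1) * h1 + (((-1)/12 : ℂ) * A 1 2 * A 2 1 + ((1)/4 : ℂ) * A 1 2 * A 2 0 + ((1)/12 : ℂ) * A 1 1 * A 2 2 + ((-1)/4 : ℂ) * A 1 0 * A 2 2) * h2 + (((-1)/12 : ℂ) * A 1 2 * A 2 1 + ((-11)/84 : ℂ)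 * A 1 2 * A 2 0 + ((1)/12 : ℂ) * A 1 1 * A 2 2 + ((11)/84 : ℂ) * A 1 0 * A 2 2) * h3 + (((1)/112 : ℂ) * A 1 2 * A 2 1 + ((-1)/16 : ℂ) * A 1 2 * A 2 0 + ((-1)/112 : ℂ) * A 1 1 * A 2 2 + ((1)/16 : ℂ) * A 1 0 * A 2 2) * h4 + (((1)/112 : ℂ) * A 1 2 * A 2 1 + ((1)/56 : ℂ) * A 1 2 * A 2 0 + ((-1)/112 : ℂ) * A 1 1 * A 2 2 + ((-1)/56 : ℂ) * A 1 0 * A 2 2) * h5 + (((-1)/1680 : ℂ) * A 1 2 * A 2 1 + ((19)/1680 : ℂ) * A 1 2 * A 2 0 + ((1)/1680 : ℂ) * A 1 1 * A 2 2 + ((-19)/1680 : ℂ) * A 1 0 * A 2 2) * h6 + (((-1)/1680 : ℂ) * A 1 2 * A 2 1 + ((-1)/720 : ℂ) * A 1 2 * A 2 0 + ((1)/1680 : ℂ) * A 1 1 * A 2 2 + ((1)/720 : ℂ) * A 1 0 * A 2 2) * h7 + (((-1)/1008 : ℂ) * A 1 2 * A 2 0 + ((1)/1008 : ℂ) * A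 1 0 * A 2 2) * h8
  have key1 : A.det * (2 * A 1 2 * A 2 2) = 0 := by
    rw [hdet]
    linear_combination (((-5)/8 : ℂ) * A 0 2 * A 2 1 + ((-1)/8 : ℂ) * A 0 2 * A 2 0 + ((5)/8 : ℂ) * A 0 1 * A 2 2 + ((1)/8 : ℂ) * A 0 0 * A 2 2) * h0 + (((19)/40 : ℂ) * A 0 2 * A 2 1 + ((5)/24 : ℂ) * A 0 2 * A 2 0 + ((-19)/40 : ℂ) * A 0 1 * A 2 2 + ((3) : ℂ) * A 0 1 * A 2 0 + ((-5)/24 : ℂ) * A 0 0 * A 2 2 + ((-3) : ℂ) * A 0 0 * A 2 1) * h1 + (((1)/12 : ℂ) * A 0 2 * A 2 1 + ((-1)/4 : ℂ) * A 0 2 * A 2 0 + ((-1)/12 : ℂ) * A 0 1 * A 2 2 + ((1)/4 : ℂ) * A 0 0 * A 2 2) * h2 + (((1)/12 : ℂ) * A 0 2 * A 2 1 + ((11)/84 : ℂ) * A 0 2 * A 2 0 + ((-1)/12 : ℂ) * A 0 1 * A 2 2 + ((-11)/84 : ℂ) * A 0 0 * A 2 2) * h3 + (((-1)/112 : ℂ)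 * A 0 2 * A 2 1 + ((1)/16 : ℂ) * A 0 2 * A 2 0 + ((1)/112 : ℂ) * A 0 1 * A 2 2 + ((-1)/16 : ℂ) * A 0 0 * A 2 2) * h4 + (((-1)/112 : ℂ) * A 0 2 * A 2 1 + ((-1)/56 : ℂ) * A 0 2 * A 2 0 + ((1)/112 : ℂ) * A 0 1 * A 2 2 + ((1)/56 : ℂ) * A 0 0 * A 2 2) * h5 + (((1)/1680 : ℂ) * A 0 2 * A 2 1 + ((-19)/1680 : ℂ) * A 0 2 * A 2 0 + ((-1)/1680 : ℂ) * A 0 1 * A 2 2 + ((19)/1680 : ℂ) * A 0 0 * A 2 2) * h6 + (((1)/1680 : ℂ) * A 0 2 * A 2 1 + ((1)/720 : ℂ) * A 0 2 * A 2 0 + ((-1)/1680 : ℂ) * A 0 1 * A 2 2 + ((-1)/720 : ℂ) * A 0 0 * A 2 2) * h7 + (((1)/1008 : ℂ) * A 0 2 * A 2 0 + ((-1)/1008 : ℂ) * A 0 0 * A 2 2) * h8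
  have key2 : A.det * (A 1 2 ^ 2 - A 0 2 ^ 2) = 0 := by
    rw [hdet]
    linear_combination (((5)/8 : ℂ) * A 0 2 * A 1 1 + ((1)/8 : ℂ) * A 0 2 * A 1 0 + ((-5)/8 : ℂ) * A 0 1 * A 1 2 + ((-1)/8 : ℂ) * A 0 0 * A 1 2) * h0 + (((-19)/40 : ℂ) * A 0 2 * A 1 1 + ((-5)/24 : ℂ) * A 0 2 * A 1 0 + ((19)/40 : ℂ) * A 0 1 * A 1 2 + ((-3) : ℂ) * A 0 1 * A 1 0 + ((5)/24 : ℂ) * A 0 0 * A 1 2 + ((3) : ℂ) * A 0 0 * A 1 1) * h1 + (((-1)/12 : ℂ) * A 0 2 * A 1 1 + ((1)/4 : ℂ) * A 0 2 * A 1 0 + ((1)/12 : ℂ) * A 0 1 * A 1 2 + ((-1)/4 : ℂ) * A 0 0 * A 1 2) * h2 + (((-1)/12 : ℂ) * A 0 2 * A 1 1 + ((-11)/84 : ℂ) * A 0 2 * A 1 0 + ((1)/12 : ℂ) * A 0 1 * A 1 2 + ((11)/84 : ℂ) * A 0 0 * A 1 2) * h3 + (((1)/112 : ℂ) * A 0 2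 * A 1 1 + ((-1)/16 : ℂ) * A 0 2 * A 1 0 + ((-1)/112 : ℂ) * A 0 1 * A 1 2 + ((1)/16 : ℂ) * A 0 0 * A 1 2) * h4 + (((1)/112 : ℂ) * A 0 2 * A 1 1 + ((1)/56 : ℂ) * A 0 2 * A 1 0 + ((-1)/112 : ℂ) * A 0 1 * A 1 2 + ((-1)/56 : ℂ) * A 0 0 * A 1 2) * h5 + (((-1)/1680 : ℂ) * A 0 2 * A 1 1 + ((19)/1680 : ℂ) * A 0 2 * A 1 0 + ((1)/1680 : ℂ) * A 0 1 * A 1 2 + ((-19)/1680 : ℂ) * A 0 0 * A 1 2) * h6 + (((-1)/1680 : ℂ) * A 0 2 * A 1 1 + ((-1)/720 : ℂ) * A 0 2 * A 1 0 + ((1)/1680 : ℂ) * A 0 1 * A 1 2 + ((1)/720 : ℂ) * A 0 0 * A 1 2) * h7 + (((-1)/1008 : ℂ) * A 0 2 * A 1 0 + ((1)/1008 : ℂ) * A 0 0 * A 1 2) * h8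
  have e0 : -3 * A 0 2 ^ 2 - 2 * A 0 2 * A 2 2 = 0 := by
    rcases mul_eq_zero.mp key0 with h' | h'
    · exact absurd h' hd
    · exact h'
  have e1 : A 1 2 * A 2 2 = 0 := by
    rcases mul_eq_zero.mp key1 with h' | h'
    · exact absurd h' hd
    · linear_combination h' / 2
  have e2 : A 1 2 ^ 2 = A 0 2 ^ 2 := by
    rcases mul_eq_zero.mp key2 with h' | h'
    · exact absurd h' hd
    · linear_combination h'
  have hp : A 0 2 = 0 ∧ A 1 2 = 0 := by
    by_cases h12 : A 1 2 = 0
    · refine ⟨?_, h12⟩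
      have : A 0 2 ^ 2 = 0 := by rw [← e2, h12]; ring
      exact pow_eq_zero_iff (n := 2) (by norm_num) |>.mp this
    · exfalso
      have h22 : A 2 2 = 0 := by
        rcases mul_eq_zero.mp e1 with h' | h'
        · exact absurd h' h12
        · exact h'
      have h02 : A 0 2 = 0 := by
        have : A 0 2 ^ 2 = 0 := by
          have := e0
          rw [h22] at this
          have h3 : (-3 : ℂ) * A 0 2 ^ 2 = 0 := by linear_combination this
          have := mul_eq_zero.mp h3
          rcases this with h' | h'
          · norm_num at h'
          · exact h'
        exact pow_eq_zero_iff (n := 2) (by norm_num) |>.mp this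
      apply h12
      have : A 1 2 ^ 2 = 0 := by rw [e2, h02]; ring
      exact pow_eq_zero_iff (n := 2) (by norm_num) |>.mp this
  refine ⟨A 2 2, ?_⟩
  funext i
  fin_cases i <;>
    simp [hmv, hp.1, hp.2]
end
end
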